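/- arXiv:math/0101037 — 4 statements merged into one kernel-verified Lean document; each statement's English description precedes it below -/
import Mathlib

section
/- (Minimal Reduction Theorem) Let $L : \mathbb{R}^n \to \mathbb{R}^n$ be linear and $N \subseteq \mathbb{R}^n$ a subspace such that there is no nonzero subspace $G \subseteq N$ with $L(G) \subseteq G$. Define $N_1 = N$, $N_{i+1} = N \cap L(N_i)$. Then for every $i$ with $1 \leq i \leq \dim N + 1$, $\dim N_i \leq \dim N - i + 1$. -/
/-!
The sequence `N₁ ⊇ N₂ ⊇ ⋯` is decreasing, and it cannot stall at a nonzero term: if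
`N_{i+1} = N_i` then `N_i ≤ L(N_i)`, so by dimension count `L(N_i) = N_i`, making `N_i` an
`L`-invariant subspace of `N`, hence zero. So the dimension drops by at least one at every
step until it reaches zero.
-/

namespace Submodule

variable {K V : Type*} [Field K] [AddCommGroup V] [Module K V]

theorem map_eq_of_le_map [FiniteDimensional K V] (L : V →ₗ[K] V) {G : Submodule K V}
    (h : G ≤ G.map L) : G.map L = G :=
  (eq_of_le_of_finrank_le h (finrank_map_le L G)).symm

section ReductionSequence

variable {L : V →ₗ[K] V} {N : Submodule K V} {Ns : ℕ → Submodule K V}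

theorem reductionSeq_succ_le (h1 : Ns 1 = N)
    (hrec : ∀ i ≥ 1, Ns (i + 1) = N ⊓ (Ns i).map L) : ∀ i ≥ 1, Ns (i + 1) ≤ Ns i := by
  intro i hi
  induction i, hi using Nat.le_induction with
  | base => rw [hrec 1 le_rfl, h1]; exact inf_le_left
  | succ i hi ih =>
    calc Ns (i + 1 + 1) = N ⊓ (Ns (i + 1)).map L := hrec _ (by omega)
      _ ≤ N ⊓ (Ns i).map L := inf_le_inf_left N (map_mono ih)
      _ = Ns (i + 1) := (hrec i hi).symm

theorem reductionSeq_eq_bot_of_succ_eq [FiniteDimensional K V]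
    (hinv : ∀ G : Submodule K V, G ≤ N → G.map L ≤ G → G = ⊥)
    (hrec : ∀ i ≥ 1, Ns (i + 1) = N ⊓ (Ns i).map L) {i : ℕ} (hi : 1 ≤ i)
    (hstall : Ns (i + 1) = Ns i) : Ns i = ⊥ := by
  have hfix : Ns i = N ⊓ (Ns i).map L := hstall ▸ hrec i hi
  have hmap : (Ns i).map L = Ns i := map_eq_of_le_map L (hfix.le.trans inf_le_right)
  exact hinv _ (hfix.le.trans inf_le_left) hmap.le

theorem finrank_reductionSeq_succ_lt_or_eq_bot [FiniteDimensional K V] (h1 : Ns 1 = N)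
    (hinv : ∀ G : Submodule K V, G ≤ N → G.map L ≤ G → G = ⊥)
    (hrec : ∀ i ≥ 1, Ns (i + 1) = N ⊓ (Ns i).map L) {i : ℕ} (hi : 1 ≤ i) :
    Module.finrank K (Ns (i + 1)) < Module.finrank K (Ns i) ∨ Ns i = ⊥ := by
  have hle := reductionSeq_succ_le h1 hrec i hi
  refine (finrank_mono hle).lt_or_eq.imp_right fun heq => ?_
  exact reductionSeq_eq_bot_of_succ_eq hinv hrec hi (eq_of_le_of_finrank_eq hle heq)

end ReductionSequence

end Submodule

open Submodule in
/-- Minimal Reduction Theorem: `dim N_i ≤ dim N - i + 1`, stated as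
`finrank (N_i) + i ≤ finrank N + 1` to avoid truncated subtraction. -/
theorem stmt_2 {n : ℕ} (L : (Fin n → ℝ) →ₗ[ℝ] (Fin n → ℝ))
    (N : Submodule ℝ (Fin n → ℝ))
    (hinv : ∀ G : Submodule ℝ (Fin n → ℝ), G ≤ N → G.map L ≤ G → G = ⊥)
    (Ns : ℕ → Submodule ℝ (Fin n → ℝ))
    (h1 : Ns 1 = N)
    (hrec : ∀ i ≥ 1, Ns (i + 1) = N ⊓ (Ns i).map L) :
    ∀ i, 1 ≤ i → i ≤ Module.finrank ℝ N + 1 →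
      Module.finrank ℝ (Ns i) + i ≤ Module.finrank ℝ N + 1 := by
  intro i hi
  induction i, hi using Nat.le_induction with
  | base => intro _; rw [h1]
  | succ i hi ih =>
    intro hbound
    rcases finrank_reductionSeq_succ_lt_or_eq_bot h1 hinv hrec hi with hlt | hbot
    · have := ih (by omega)
      omega
    · have hsucc : Ns (i + 1) = ⊥ := le_bot_iff.mp (hbot ▸ reductionSeq_succ_le h1 hrec i hi)
      rw [hsucc, finrank_bot]
      omega
end

section
/- Let $L : \mathbb{R}^n \to \mathbb{R}^n$ be linear, $N$ a subspace with no nonzero $L$-invariant subspace contained in $N$, and define $N_1 = N$, $N_{i+1} = N \cap L(N_i)$. Then $N_{\dim N + 1} = \{0\}$. -/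
/-!
The spaces `N_i` form a decreasing chain inside `N`. If the chain fails to drop strictly at
some step, then `N_i ≤ L(N_i)`, and since `dim L(N_i) ≤ dim N_i` this forces `L(N_i) = N_i`;
so `N_i` is an `L`-invariant subspace of `N`, hence zero. Thus the dimension drops at every
step until the chain reaches `0`, which takes at most `dim N` steps.
-/

section NestedImage

variable {K V : Type*} [DivisionRing K] [AddCommGroup V] [Module K V]

/-- `nestedImage L N k` is the paper's `N_{k+1}`. -/
def nestedImage (L : V →ₗ[K] V) (N : Submodule K V) : ℕ → Submodule K V
  | 0 => N
  | k + 1 => N ⊓ (nestedImage L N k).map L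

variable (L : V →ₗ[K] V) (N : Submodule K V)

theorem nestedImage_le (k : ℕ) : nestedImage L N k ≤ N := by
  cases k with
  | zero => exact le_rfl
  | succ k => exact inf_le_left

theorem nestedImage_succ_le (k : ℕ) : nestedImage L N (k + 1) ≤ nestedImage L N k := by
  induction k with
  | zero => exact inf_le_left
  | succ k ih => exact inf_le_inf_left N (Submodule.map_mono ih)

theorem eq_bot_of_nestedImage_le_succ [FiniteDimensional K V]
    (hinv : ∀ G : Submodule K V, G ≤ N → G.map L ≤ G → G = ⊥) {k : ℕ}
    (hk : nestedImage L N k ≤ nestedImage L N (k + 1)) : nestedImage L N k = ⊥ := by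
  have hle_map : nestedImage L N k ≤ (nestedImage L N k).map L := hk.trans inf_le_right
  have hmap : (nestedImage L N k).map L = nestedImage L N k :=
    (Submodule.eq_of_le_of_finrank_le hle_map (Submodule.finrank_map_le L _)).symm
  exact hinv _ (nestedImage_le L N k) hmap.le

theorem finrank_nestedImage_add_le [FiniteDimensional K V]
    (hinv : ∀ G : Submodule K V, G ≤ N → G.map L ≤ G → G = ⊥) {k : ℕ}
    (hk : nestedImage L N k ≠ ⊥) :
    Module.finrank K (nestedImage L N k) + k ≤ Module.finrank K N := by
  induction k with
  | zero => exact le_rfl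
  | succ k ih =>
    have hprev : nestedImage L N k ≠ ⊥ := fun h ↦
      hk (le_bot_iff.mp (h ▸ nestedImage_succ_le L N k))
    have hlt : nestedImage L N (k + 1) < nestedImage L N k :=
      (nestedImage_succ_le L N k).lt_of_not_ge
        fun h ↦ hprev (eq_bot_of_nestedImage_le_succ L N hinv h)
    have := Submodule.finrank_lt_finrank_of_lt hlt
    have := ih hprev
    omega

theorem nestedImage_finrank_eq_bot [FiniteDimensional K V]
    (hinv : ∀ G : Submodule K V, G ≤ N → G.map L ≤ G → G = ⊥) :
    nestedImage L N (Module.finrank K N) = ⊥ := by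
  by_contra hne
  have hdim := finrank_nestedImage_add_le L N hinv hne
  exact hne (Submodule.finrank_eq_zero.mp (by omega))

end NestedImage

theorem stmt_3 {n : ℕ} (L : (Fin n → ℝ) →ₗ[ℝ] (Fin n → ℝ))
    (N : Submodule ℝ (Fin n → ℝ))
    (hinv : ∀ G : Submodule ℝ (Fin n → ℝ), G ≤ N → G.map L ≤ G → G = ⊥)
    (Ns : ℕ → Submodule ℝ (Fin n → ℝ))
    (h1 : Ns 1 = N)
    (hrec : ∀ i ≥ 1, Ns (i + 1) = N ⊓ (Ns i).map L) :
    Ns (Module.finrank ℝ N + 1) = ⊥ := by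
  have hNs : ∀ k, Ns (k + 1) = nestedImage L N k := by
    intro k
    induction k with
    | zero => exact h1
    | succ k ih => rw [hrec (k + 1) (by omega), ih, nestedImage]
  rw [hNs]
  exact nestedImage_finrank_eq_bot L N hinv
end

section
/- Let $K, M$ be subspaces of $\mathbb{R}^n$, let $P_{K^\perp}$ and $P_M$ denote the orthogonal projections onto $K^\perp$ and $M$, and let $L : \mathbb{R}^n \to \mathbb{R}^n$ be an invertible linear map. Then $K$ and $L(M)$ intersect transversely (i.e., $\dim(K \cap L(M)) = \max(\dim K + \dim M - n, 0)$) if and only if $\operatorname{rank}(P_{K^\perp} \circ L \circ P_M) = \min(\dim K^\perp, \dim M)$. -/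
/-!
Restricting `P_{K⊥}` to the subspace `W = L(M)` has kernel `K ∩ W`, so by rank–nullity the rank of
`P_{K⊥} ∘ L ∘ P_M`, whose range is `P_{K⊥}(W)`, equals `dim M - dim (K ∩ L(M))`. Since this rank is
at most `dim K⊥ = n - dim K`, it equals `min (dim K⊥) (dim M)` exactly when
`dim (K ∩ L(M)) = max (dim K + dim M - n) 0`.
-/

open Module

theorem Submodule.finrank_map_add_finrank_inf_ker {K V V₂ : Type*} [DivisionRing K]
    [AddCommGroup V] [Module K V] [FiniteDimensional K V] [AddCommGroup V₂] [Module K V₂]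
    (f : V →ₗ[K] V₂) (W : Submodule K V) :
    finrank K (W.map f) + finrank K (W ⊓ LinearMap.ker f : Submodule K V) = finrank K W := by
  rw [← LinearMap.range_domRestrict, ← (f.domRestrict W).finrank_range_add_finrank_ker,
    LinearMap.ker_domRestrict, ← Submodule.map_comap_subtype, Submodule.finrank_map_subtype_eq]

theorem Submodule.finrank_map_starProjection_orthogonal_add_finrank_inf {𝕜 E : Type*} [RCLike 𝕜]
    [NormedAddCommGroup E] [InnerProductSpace 𝕜 E] [FiniteDimensional 𝕜 E]
    (K W : Submodule 𝕜 E) :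
    finrank 𝕜 (W.map (Kᗮ.starProjection : E →ₗ[𝕜] E)) + finrank 𝕜 (K ⊓ W : Submodule 𝕜 E) =
      finrank 𝕜 W := by
  have h := W.finrank_map_add_finrank_inf_ker (Kᗮ.starProjection : E →ₗ[𝕜] E)
  rwa [inf_comm, Submodule.ker_starProjection, Submodule.orthogonal_orthogonal] at h

theorem stmt_13 {n : ℕ} (K M : Submodule ℝ (EuclideanSpace ℝ (Fin n)))
    (L : EuclideanSpace ℝ (Fin n) →ₗ[ℝ] EuclideanSpace ℝ (Fin n))
    (hL : Function.Bijective L) :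
    Module.finrank ℝ (K ⊓ M.map L : Submodule ℝ (EuclideanSpace ℝ (Fin n))) =
        Module.finrank ℝ K + Module.finrank ℝ M - n ↔
      Module.finrank ℝ
          (LinearMap.range
            ((Kᗮ.subtype ∘ₗ (Submodule.orthogonalProjectionOnto Kᗮ).toLinearMap) ∘ₗ L ∘ₗ
              (M.subtype ∘ₗ (Submodule.orthogonalProjectionOnto M).toLinearMap))) =
        min (Module.finrank ℝ Kᗮ) (Module.finrank ℝ M) := by
  have hP (U : Submodule ℝ (EuclideanSpace ℝ (Fin n))) :
      U.subtype ∘ₗ U.orthogonalProjectionOnto.toLinearMap = U.starProjection := rfl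
  rw [hP, hP, LinearMap.range_comp, LinearMap.range_comp, Submodule.range_starProjection]
  have hrank := K.finrank_map_starProjection_orthogonal_add_finrank_inf (M.map L)
  have hLM : finrank ℝ (M.map L) = finrank ℝ M :=
    (Submodule.equivMapOfInjective L hL.injective M).finrank_eq.symm
  have hproj_le : finrank ℝ ((M.map L).map
      (Kᗮ.starProjection : EuclideanSpace ℝ (Fin n) →ₗ[ℝ] EuclideanSpace ℝ (Fin n))) ≤
      finrank ℝ Kᗮ :=
    Submodule.finrank_mono (LinearMap.map_le_range.trans_eq Kᗮ.range_starProjection)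
  have hK : finrank ℝ K + finrank ℝ Kᗮ = n := by
    rw [K.finrank_add_finrank_orthogonal, finrank_euclideanSpace_fin]
  omega
end

section
/- Let $V \subseteq \mathbb{R}^n$ be a fixed $k$-dimensional subspace with $k \geq 1$, and fix $T \geq 1$. The set of $n \times n$ matrices $L$ such that $\dim(V + L(V) + \cdots + L^{j-1}(V)) = \min(jk, n)$ for all $1 \leq j \leq T$ is open and dense (indeed of full Lebesgue measure) in $\mathbb{R}^{n^2}$. -/
/-! For fixed `j`, the space `V + L V + ⋯ + L^(j-1) V` is the column span of the Krylov matrix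
`[v, L v, …, L^(j-1) v]` built from a basis `v` of `V`, whose entries are polynomials in the
entries of `L`. It has the maximal dimension `min (j * k) n` iff the Gram determinant `det (Aᵀ A)` or
`det (A Aᵀ)` of that matrix is nonzero. This determinant is a nonzero polynomial in `L`, because a
block shift matrix attains the maximal dimension; and the zero set of a nonzero polynomial is closed
and Lebesgue-null (induction on the number of variables, using Fubini). A null set has dense
complement. -/

open MeasureTheory Module

theorem MeasureTheory.volume_measurePreserving_uncurry (ι κ X : Type*) [Fintype ι] [Fintype κ]
    [MeasureSpace X] [SigmaFinite (volume : Measure X)] :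
    MeasurePreserving (MeasurableEquiv.curry ι κ X).symm volume volume := by
  refine ⟨MeasurableEquiv.measurable _, (Measure.pi_eq fun s hs => ?_).symm⟩
  rw [MeasurableEquiv.map_apply, MeasurableEquiv.coe_curry_symm]
  have : Function.uncurry ⁻¹' Set.univ.pi s =
      Set.univ.pi fun i => Set.univ.pi fun j => s (i, j) := by
    ext L; simp
  rw [this, volume_pi_pi]
  simp_rw [volume_pi_pi]
  exact (Fintype.prod_prod_type fun p : ι × κ => volume (s p)).symm

namespace MvPolynomial

theorem volume_setOf_eval_eq_zero_fin :
    ∀ {d : ℕ} {p : MvPolynomial (Fin d) ℝ}, p ≠ 0 → volume {x | eval x p = 0} = 0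
  | 0, p, hp => by
    obtain ⟨c, rfl⟩ := C_surjective (Fin 0) p
    have hc : c ≠ 0 := by rintro rfl; exact hp C_0
    simp [hc]
  | d + 1, p, hp => by
    set q := finSuccEquiv ℝ d p
    have hq : q ≠ 0 := by simpa [q] using hp
    have hlead : volume {y | eval y q.leadingCoeff = 0} = 0 :=
      volume_setOf_eval_eq_zero_fin (Polynomial.leadingCoeff_ne_zero.mpr hq)
    let e := MeasurableEquiv.piFinSuccAbove (fun _ : Fin (d + 1) => ℝ) 0
    have he : MeasurePreserving e volume volume := volume_preserving_piFinSuccAbove _ 0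
    have hZ : MeasurableSet {x : Fin (d + 1) → ℝ | eval x p = 0} :=
      (continuous_eval p).measurable (measurableSet_singleton 0)
    rw [← he.symm.measure_preimage_equiv, Measure.volume_eq_prod,
      Measure.prod_apply_symm (e.symm.measurable hZ)]
    -- Fubini: for a.e. `y` the leading coefficient of `q` survives at `y`, so the slice
    -- through `y` is the finite root set of a nonzero polynomial
    refine lintegral_eq_zero_of_ae_eq_zero ?_
    filter_upwards [measure_eq_zero_iff_ae_notMem.mp hlead] with y hy
    have hqy : q.map (eval y) ≠ 0 := fun h => hy <| by
      simpa [Polynomial.coeff_map] using congrArg (Polynomial.coeff · q.natDegree) h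
    refine Set.Finite.measure_zero ?_ _
    convert Polynomial.finite_setOfPred_isRoot hqy using 1
    ext t
    simp [e, q, Fin.insertNthEquiv, eval_eq_eval_mv_eval']

theorem volume_setOf_eval_eq_zero {ι : Type*} [Fintype ι] {p : MvPolynomial ι ℝ}
    (hp : p ≠ 0) :
    volume {x : ι → ℝ | eval x p = 0} = 0 := by
  let e := Fintype.equivFin ι
  have hp' : rename e p ≠ 0 := by simpa using (rename_injective e e.injective).ne hp
  let E := MeasurableEquiv.piCongrLeft (fun _ => ℝ) e
  have hE : {x : ι → ℝ | eval x p = 0} = E ⁻¹' {y | eval y (rename e p) = 0} := by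
    ext x
    have hx : E x ∘ e = x :=
      _root_.funext (Equiv.piCongrLeft_apply_apply (fun _ => ℝ) e (f := x))
    simp only [Set.mem_ofPred_eq, Set.mem_preimage, eval_rename, hx]
  rw [hE, (volume_measurePreserving_piCongrLeft (fun _ => ℝ) e).measure_preimage_equiv]
  exact volume_setOf_eval_eq_zero_fin hp'

variable {ι κ : Type*}

theorem isOpen_setOf_forall_eval_uncurry_ne_zero {α : Type*} (s : Finset α)
    (P : α → MvPolynomial (ι × κ) ℝ) :
    IsOpen {L : ι → κ → ℝ | ∀ a ∈ s, eval (Function.uncurry L) (P a) ≠ 0} := by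
  simp only [Set.ofPred_forall]
  exact isOpen_biInter_finset fun a _ =>
    isOpen_ne_fun ((continuous_eval (P a)).comp (by fun_prop)) continuous_const

theorem volume_setOf_eval_uncurry_eq_zero [Fintype ι] [Fintype κ] {p : MvPolynomial (ι × κ) ℝ}
    (hp : p ≠ 0) :
    volume {L : ι → κ → ℝ | eval (Function.uncurry L) p = 0} = 0 :=
  ((volume_measurePreserving_uncurry ι κ ℝ).measure_preimage_equiv _).trans
    (volume_setOf_eval_eq_zero hp)

theorem volume_setOf_not_forall_eval_uncurry_ne_zero [Fintype ι] [Fintype κ] {α : Type*}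
    (s : Finset α) {P : α → MvPolynomial (ι × κ) ℝ} (hP : ∀ a ∈ s, P a ≠ 0) :
    volume {L : ι → κ → ℝ | ¬ ∀ a ∈ s, eval (Function.uncurry L) (P a) ≠ 0} = 0 := by
  simp only [not_forall, not_not, Set.ofPred_exists]
  exact (measure_biUnion_null_iff s.countable_toSet).mpr fun a ha =>
    volume_setOf_eval_uncurry_eq_zero (hP a ha)

end MvPolynomial

namespace Matrix

variable {m n κ K R S : Type*} [Fintype m] [Fintype n] [DecidableEq m] [DecidableEq n]

theorem mulVecLin_pow [CommSemiring R] (M : Matrix n n R) (i : ℕ) :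
    M.mulVecLin ^ i = (M ^ i).mulVecLin :=
  (map_pow Matrix.toLinAlgEquiv' M i).symm

def krylov [CommSemiring R] (M : Matrix n n R) (v : κ → n → R) (j : ℕ) :
    Matrix n (Fin j × κ) R :=
  of fun r c => (M ^ (c.1 : ℕ) *ᵥ v c.2) r

theorem map_krylov [CommSemiring R] [CommSemiring S] (f : R →+* S) (M : Matrix n n R)
    (v : κ → n → R) (j : ℕ) :
    (krylov M v j).map f = krylov (M.map f) (fun a => f ∘ v a) j := by
  ext r c
  simp only [krylov, map_apply, of_apply, RingHom.map_mulVec]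
  rw [← RingHom.mapMatrix_apply, map_pow, RingHom.mapMatrix_apply]

theorem span_range_col_krylov [CommSemiring R] (M : Matrix n n R) (v : κ → n → R) (j : ℕ) :
    Submodule.span R (Set.range (krylov M v j).col) =
      ⨆ i : Fin j, (Submodule.span R (Set.range v)).map (M.mulVecLin ^ (i : ℕ)) := by
  simp_rw [Submodule.map_span, ← Submodule.span_iUnion, ← Set.range_comp, mulVecLin_pow]
  congr 1
  ext x
  simp only [Set.mem_range, Set.mem_iUnion, Prod.exists]
  rfl

theorem rank_krylov [Fintype κ] [CommSemiring R] (M : Matrix n n R) (v : κ → n → R) (j : ℕ) :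
    (krylov M v j).rank =
      finrank R (⨆ i : Fin j, (Submodule.span R (Set.range v)).map (M.mulVecLin ^ (i : ℕ)) :
        Submodule R (n → R)) := by
  rw [rank_eq_finrank_span_cols, span_range_col_krylov]

theorem det_ne_zero_iff_rank_eq_card [Field K] (A : Matrix n n K) :
    A.det ≠ 0 ↔ A.rank = Fintype.card n := by
  refine ⟨rank_of_det_ne_zero, fun h => ?_⟩
  rw [rank_eq_finrank_span_cols, ← Set.finrank, eq_comm,
    ← linearIndependent_iff_card_eq_finrank_span, linearIndependent_cols_iff_isUnit,
    isUnit_iff_isUnit_det] at h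
  exact h.ne_zero

def fullRankDet [CommRing R] (A : Matrix m n R) : R :=
  if Fintype.card n ≤ Fintype.card m then (Aᵀ * A).det else (A * Aᵀ).det

theorem _root_.RingHom.map_fullRankDet [CommRing R] [CommRing S] (f : R →+* S)
    (A : Matrix m n R) :
    f A.fullRankDet = (A.map f).fullRankDet := by
  unfold fullRankDet
  split_ifs <;> simp [RingHom.map_det, RingHom.mapMatrix_apply, Matrix.map_mul, transpose_map]

theorem fullRankDet_ne_zero_iff [Field K] [LinearOrder K] [IsStrictOrderedRing K]
    (A : Matrix m n K) :
    A.fullRankDet ≠ 0 ↔ A.rank = min (Fintype.card n) (Fintype.card m) := by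
  unfold fullRankDet
  split_ifs with h
  · rw [det_ne_zero_iff_rank_eq_card, rank_transpose_mul_self, min_eq_left h]
  · rw [det_ne_zero_iff_rank_eq_card, rank_self_mul_transpose, min_eq_right (le_of_not_ge h)]

end Matrix

theorem Module.Basis.span_range_coe {ι K E : Type*} [Semiring K] [AddCommMonoid E] [Module K E]
    {V : Submodule K E} (b : Basis ι K V) :
    Submodule.span K (Set.range fun i => (b i : E)) = V := by
  have := congrArg (Submodule.map V.subtype) b.span_eq
  rwa [Submodule.map_span, Submodule.map_top, Submodule.range_subtype, ← Set.range_comp] at this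

section Krylov

variable {K E : Type*} [Field K] [AddCommGroup E] [Module K E]

theorem Module.Basis.exists_le_finrank_iSup_map_pow {d k : ℕ} (B : Basis (Fin d) K E)
    (V : Submodule K E) (hB : ∀ a : Fin d, (a : ℕ) < k → B a ∈ V) :
    ∃ L : E →ₗ[K] E, ∀ j, min (j * k) d ≤
      finrank K (⨆ i : Fin j, V.map (L ^ (i : ℕ)) : Submodule K E) := by
  let b : ℕ → E := fun r => if h : r < d then B ⟨r, h⟩ else 0
  have hb : ∀ r (h : r < d), b r = B ⟨r, h⟩ := fun r h => dif_pos h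
  have hbV : ∀ r < k, b r ∈ V := fun r hr => by
    by_cases h : r < d
    · rw [hb r h]; exact hB _ hr
    · simp [b, h]
  -- extending `B` by zero past `d` makes `L` the shift `b r ↦ b (r + k)` for every `r : ℕ`
  let L : E →ₗ[K] E := B.constr K fun r => b (r + k)
  have hL : ∀ r, L (b r) = b (r + k) := fun r => by
    by_cases h : r < d
    · rw [hb r h, B.constr_basis]
    · simp [b, h, show ¬ r + k < d by omega]
  have hLpow : ∀ t r, (L ^ t) (b r) = b (r + t * k) := by
    intro t
    induction t with
    | zero => simp
    | succ t ih => intro r; rw [pow_succ, Module.End.mul_apply, hL, ih]; ring_nf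
  have : FiniteDimensional K E := Module.Finite.of_basis B
  refine ⟨L, fun j => ?_⟩
  set m := min (j * k) d
  have hmd : m ≤ d := min_le_right _ _
  have hli : LinearIndependent K fun r : Fin m => B (Fin.castLE hmd r) :=
    B.linearIndependent.comp _ (Fin.castLE_injective hmd)
  calc m = finrank K (Submodule.span K (Set.range fun r : Fin m => B (Fin.castLE hmd r))) := by
        rw [finrank_span_eq_card hli, Fintype.card_fin]
    _ ≤ _ := by
      refine Submodule.finrank_mono <|
        Submodule.span_le.mpr <| Set.range_subset_iff.mpr fun r => ?_
      have hrjk : (r : ℕ) < j * k := r.2.trans_le (min_le_left _ _)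
      have hk : 0 < k := Nat.pos_of_ne_zero fun h => by simp [h] at hrjk
      have hrj : (r : ℕ) / k < j := Nat.div_lt_of_lt_mul (by rwa [mul_comm] at hrjk)
      have hr : B (Fin.castLE hmd r) = (L ^ ((r : ℕ) / k)) (b ((r : ℕ) % k)) := by
        rw [hLpow, Nat.mod_add_div', hb]; rfl
      rw [SetLike.mem_coe, hr]
      exact Submodule.mem_iSup_of_mem ⟨_, hrj⟩
        (Submodule.mem_map_of_mem (hbV _ (Nat.mod_lt _ hk)))

theorem Submodule.exists_le_finrank_iSup_map_pow [FiniteDimensional K E] (V : Submodule K E) :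
    ∃ L : E →ₗ[K] E, ∀ j, min (j * finrank K V) (finrank K E) ≤
      finrank K (⨆ i : Fin j, V.map (L ^ (i : ℕ)) : Submodule K E) := by
  obtain ⟨W, hW⟩ := V.exists_isCompl
  let B := (((finBasis K V).prod (finBasis K W)).map (V.prodEquivOfIsCompl W hW)).reindex
    finSumFinEquiv
  obtain ⟨L, hL⟩ := B.exists_le_finrank_iSup_map_pow V fun a ha => by
    obtain ⟨a, rfl⟩ : ∃ a' : Fin (finrank K V), a = Fin.castAdd _ a' := ⟨⟨a, ha⟩, rfl⟩
    simp [B]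
  refine ⟨L, fun j => ?_⟩
  simpa [← V.finrank_add_eq_of_isCompl hW] using hL j

end Krylov

section KrylovRankPoly

open Matrix MvPolynomial

variable {n κ : Type*} [Fintype n] [DecidableEq n] [Fintype κ]

theorem finrank_iSup_map_pow_le_min (v : κ → n → ℝ) (j : ℕ) (L : Matrix n n ℝ) :
    finrank ℝ (⨆ i : Fin j, (Submodule.span ℝ (Set.range v)).map (L.mulVecLin ^ (i : ℕ)) :
        Submodule ℝ (n → ℝ)) ≤ min (j * Fintype.card κ) (Fintype.card n) := by
  rw [← rank_krylov]
  refine le_min ?_ (krylov L v j).rank_le_card_height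
  simpa using (krylov L v j).rank_le_card_width

variable [DecidableEq κ]

noncomputable def krylovRankPoly (v : κ → n → ℝ) (j : ℕ) : MvPolynomial (n × n) ℝ :=
  (krylov (mvPolynomialX n n ℝ) (fun a r => C (v a r)) j).fullRankDet

theorem eval_krylovRankPoly (v : κ → n → ℝ) (j : ℕ) (L : Matrix n n ℝ) :
    eval (fun p => L p.1 p.2) (krylovRankPoly v j) = (krylov L v j).fullRankDet := by
  rw [krylovRankPoly, RingHom.map_fullRankDet, map_krylov]
  congr
  · exact mvPolynomialX_map_eval₂ _ L
  · ext a r; simp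

theorem finrank_iSup_map_pow_eq_min_iff (v : κ → n → ℝ) (j : ℕ) (L : Matrix n n ℝ) :
    finrank ℝ (⨆ i : Fin j, (Submodule.span ℝ (Set.range v)).map (L.mulVecLin ^ (i : ℕ)) :
        Submodule ℝ (n → ℝ)) = min (j * Fintype.card κ) (Fintype.card n) ↔
      eval (fun p => L p.1 p.2) (krylovRankPoly v j) ≠ 0 := by
  rw [eval_krylovRankPoly, fullRankDet_ne_zero_iff, rank_krylov, Fintype.card_prod,
    Fintype.card_fin]

theorem krylovRankPoly_ne_zero {V : Submodule ℝ (n → ℝ)} (b : Basis κ ℝ V) (j : ℕ) :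
    krylovRankPoly (fun a => (b a : n → ℝ)) j ≠ 0 := by
  obtain ⟨L, hL⟩ := V.exists_le_finrank_iSup_map_pow
  have hmul : (LinearMap.toMatrix' L).mulVecLin = L := by
    rw [← toLin'_apply', toLin'_toMatrix']
  intro h
  refine (finrank_iSup_map_pow_eq_min_iff _ j (LinearMap.toMatrix' L)).mp ?_ (by rw [h, map_zero])
  refine (finrank_iSup_map_pow_le_min _ j _).antisymm ?_
  rw [b.span_range_coe, hmul, ← finrank_eq_card_basis b,
    ← Module.finrank_fintype_fun_eq_card (R := ℝ)]
  exact hL j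

end KrylovRankPoly

theorem stmt_17_general {n k T : ℕ}
    (V : Submodule ℝ (Fin n → ℝ)) (hV : Module.finrank ℝ V = k) :
    IsOpen {L : Fin n → Fin n → ℝ |
        ∀ j, 1 ≤ j → j ≤ T →
          Module.finrank ℝ
              (⨆ i : Fin j, V.map ((Matrix.of L).mulVecLin ^ (i : ℕ)) :
                Submodule ℝ (Fin n → ℝ)) = min (j * k) n} ∧
    Dense {L : Fin n → Fin n → ℝ |
        ∀ j, 1 ≤ j → j ≤ T →
          Module.finrank ℝ
              (⨆ i : Fin j, V.map ((Matrix.of L).mulVecLin ^ (i : ℕ)) :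
                Submodule ℝ (Fin n → ℝ)) = min (j * k) n} ∧
    volume {L : Fin n → Fin n → ℝ |
        ¬ ∀ j, 1 ≤ j → j ≤ T →
          Module.finrank ℝ
              (⨆ i : Fin j, V.map ((Matrix.of L).mulVecLin ^ (i : ℕ)) :
                Submodule ℝ (Fin n → ℝ)) = min (j * k) n} = 0 := by
  let b := Module.finBasisOfFinrankEq ℝ V hV
  let P j := krylovRankPoly (fun a => (b a : Fin n → ℝ)) j
  have hj : ∀ j (L : Fin n → Fin n → ℝ),
      Module.finrank ℝ (⨆ i : Fin j, V.map ((Matrix.of L).mulVecLin ^ (i : ℕ)) :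
        Submodule ℝ (Fin n → ℝ)) = min (j * k) n ↔
      MvPolynomial.eval (Function.uncurry L) (P j) ≠ 0 := fun j L => by
    have := finrank_iSup_map_pow_eq_min_iff (fun a => (b a : Fin n → ℝ)) j (Matrix.of L)
    rwa [b.span_range_coe, Fintype.card_fin, Fintype.card_fin] at this
  have hcond : ∀ L : Fin n → Fin n → ℝ, (∀ j, 1 ≤ j → j ≤ T →
      Module.finrank ℝ (⨆ i : Fin j, V.map ((Matrix.of L).mulVecLin ^ (i : ℕ)) :
        Submodule ℝ (Fin n → ℝ)) = min (j * k) n) ↔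
      ∀ j ∈ Finset.Icc 1 T, MvPolynomial.eval (Function.uncurry L) (P j) ≠ 0 := fun L => by
    simp only [Finset.mem_Icc, and_imp, hj]
  simp only [hcond]
  have hnull := MvPolynomial.volume_setOf_not_forall_eval_uncurry_ne_zero (Finset.Icc 1 T)
    fun j _ => krylovRankPoly_ne_zero b j
  exact ⟨MvPolynomial.isOpen_setOf_forall_eval_uncurry_ne_zero _ _,
    Measure.dense_of_ae (ae_iff.mpr hnull), hnull⟩

/-- Matrices are identified with `Fin n → Fin n → ℝ ≅ ℝ^(n²)` carrying
Lebesgue (product) measure. -/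
theorem stmt_17 {n k T : ℕ} (hk : 1 ≤ k)
    (V : Submodule ℝ (Fin n → ℝ)) (hV : Module.finrank ℝ V = k) (hT : 1 ≤ T) :
    IsOpen {L : Fin n → Fin n → ℝ |
        ∀ j, 1 ≤ j → j ≤ T →
          Module.finrank ℝ
              (⨆ i : Fin j, V.map ((Matrix.of L).mulVecLin ^ (i : ℕ)) :
                Submodule ℝ (Fin n → ℝ)) = min (j * k) n} ∧
    Dense {L : Fin n → Fin n → ℝ |
        ∀ j, 1 ≤ j → j ≤ T →
          Module.finrank ℝ
              (⨆ i : Fin j, V.map ((Matrix.of L).mulVecLin ^ (i : ℕ)) :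
                Submodule ℝ (Fin n → ℝ)) = min (j * k) n} ∧
    volume {L : Fin n → Fin n → ℝ |
        ¬ ∀ j, 1 ≤ j → j ≤ T →
          Module.finrank ℝ
              (⨆ i : Fin j, V.map ((Matrix.of L).mulVecLin ^ (i : ℕ)) :
                Submodule ℝ (Fin n → ℝ)) = min (j * k) n} = 0 :=
  stmt_17_general V hV
end
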